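/- arXiv:math/0612766 — 3 statements merged into one kernel-verified Lean document; each statement's English description precedes it below -/
import Mathlib

section
/- Let I ⊆ ℝ be an open interval, Ω = {z ∈ ℂ : Re z ∈ I}, τ ≠ 0 a real number, H : I → ℝ a smooth function, and G : I → ℝ a smooth function with G' = H. Suppose f : Ω → ℝ is smooth and satisfies that (f_s(z) + i·f_t(z))·(H(Re z) − iτ) is real for every z ∈ Ω (equivalently, f_z̄·(H − iτ) ∈ ℝ). Then for every z₀ ∈ Ω there exist an open neighborhood U ⊆ Ω of z₀ and a smooth function g : ℝ → ℝ such that f(s + it) = g(τ·t + G(s)) for all s + it ∈ U; that is, locally f is a function of δ := τ·t + ∫H(s)ds alone. -/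
open Complex

/-- Wirtinger derivative `∂f/∂z = (f_s - i f_t)/2`. -/
noncomputable def wdz (f : ℂ → ℂ) (z : ℂ) : ℂ :=
  (fderiv ℝ f z 1 - Complex.I * fderiv ℝ f z Complex.I) / 2

/-- Wirtinger derivative `∂f/∂z̄ = (f_s + i f_t)/2`. -/
noncomputable def wdzbar (f : ℂ → ℂ) (z : ℂ) : ℂ :=
  (fderiv ℝ f z 1 + Complex.I * fderiv ℝ f z Complex.I) / 2

/-- A fundamental data set `(λ, u, H, p, A)` on `Ω` for the pair `(κ, τ)`:
smooth functions `lam, u, H : Ω → ℝ` with `lam > 0`, and `p, A : Ω → ℂ`,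
satisfying the integrability equations (C.1)–(C.4). -/
structure IsFundData (κ τ : ℝ) (Ω : Set ℂ) (lam u H : ℂ → ℝ) (p A : ℂ → ℂ) : Prop where
  smooth_lam : ContDiffOn ℝ (⊤ : ℕ∞) lam Ω
  smooth_u : ContDiffOn ℝ (⊤ : ℕ∞) u Ω
  smooth_H : ContDiffOn ℝ (⊤ : ℕ∞) H Ω
  smooth_p : ContDiffOn ℝ (⊤ : ℕ∞) p Ω
  smooth_A : ContDiffOn ℝ (⊤ : ℕ∞) A Ω
  lam_pos : ∀ z ∈ Ω, 0 < lam z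
  c1 : ∀ z ∈ Ω, wdzbar p z =
    ((lam z : ℂ) / 2) * (wdz (fun w => (H w : ℂ)) z + (u z : ℂ) * A z * ((κ : ℂ) - 4 * (τ : ℂ) ^ 2))
  c2 : ∀ z ∈ Ω, wdzbar A z = ((u z : ℂ) * (lam z : ℂ) / 2) * ((H z : ℂ) + Complex.I * (τ : ℂ))
  c3 : ∀ z ∈ Ω, wdz (fun w => (u w : ℂ)) z =
    -((H z : ℂ) - Complex.I * (τ : ℂ)) * A z - (2 * p z / (lam z : ℂ)) * (starRingEnd ℂ) (A z)
  c4 : ∀ z ∈ Ω, 4 * ‖A z‖ ^ 2 / lam z = 1 - (u z) ^ 2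

/-- Equation (efedelta): if `f_z̄·(H(s) − iτ)` is real on the strip `{Re z ∈ I}`, where
`H` depends only on `s = Re z` and `τ ≠ 0`, then locally `f` is a function of
`δ = τ·t + ∫ H(s) ds` alone. -/
theorem stmt_8 (I : Set ℝ) (hIopen : IsOpen I) (hIconn : I.OrdConnected)
    (τ : ℝ) (hτ : τ ≠ 0) (H G : ℝ → ℝ) (hH : ContDiffOn ℝ (⊤ : ℕ∞) H I)
    (hG : ∀ s ∈ I, HasDerivAt G (H s) s)
    (f : ℂ → ℝ) (hf : ContDiffOn ℝ (⊤ : ℕ∞) f {z : ℂ | z.re ∈ I})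
    (hPDE : ∀ z ∈ {z : ℂ | z.re ∈ I},
      ((((fderiv ℝ f z 1 : ℝ) : ℂ) + Complex.I * ((fderiv ℝ f z Complex.I : ℝ) : ℂ))
        * (((H z.re : ℝ) : ℂ) - Complex.I * (τ : ℂ))).im = 0) :
    ∀ z₀ ∈ {z : ℂ | z.re ∈ I}, ∃ U : Set ℂ, IsOpen U ∧ z₀ ∈ U ∧
      U ⊆ {z : ℂ | z.re ∈ I} ∧ ∃ g : ℝ → ℝ, ContDiff ℝ (⊤ : ℕ∞) g ∧
        ∀ z ∈ U, f z = g (τ * z.im + G z.re) := by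
  have hstrip : IsOpen {z : ℂ | z.re ∈ I} := hIopen.preimage Complex.continuous_re
  have hPDE' : ∀ z ∈ {z : ℂ | z.re ∈ I},
      (fderiv ℝ f z Complex.I) * H z.re - (fderiv ℝ f z 1) * τ = 0 := by
    intro z hz
    have h := hPDE z hz
    simp [Complex.add_im, Complex.mul_im] at h
    linarith
  intro z₀ hz₀
  obtain ⟨ε, hε, hball⟩ := Metric.isOpen_iff.mp hIopen z₀.re hz₀
  refine ⟨{z : ℂ | z.re ∈ Metric.ball z₀.re ε}, Metric.isOpen_ball.preimage Complex.continuous_re,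
    Metric.mem_ball_self hε, fun z hz => hball hz, ?_⟩
  set c := G z₀.re with hc
  -- the curve used to define g
  set γ : ℝ → ℂ := fun δ => (z₀.re : ℂ) + (((δ - c) / τ : ℝ) : ℂ) * Complex.I with hγ
  have hγmem : ∀ δ : ℝ, γ δ ∈ {z : ℂ | z.re ∈ I} := by
    intro δ; simp [hγ]; exact hz₀
  refine ⟨fun δ => f (γ δ), ?_, ?_⟩
  · -- smoothness of g
    refine hf.comp_contDiff ?_ hγmem
    exact contDiff_const.add
      ((Complex.ofRealCLM.contDiff.comp ((contDiff_id.sub contDiff_const).div_const τ)).mul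
        contDiff_const)
  · -- main identity
    intro z hz
    simp only [Set.mem_setOf_eq] at hz
    set δ : ℝ := τ * z.im + G z.re with hδ
    -- the family of curves at fixed δ
    set φ : ℝ → ℂ := fun s => (s : ℂ) + (((δ - G s) / τ : ℝ) : ℂ) * Complex.I with hφ
    have hφre : ∀ s, (φ s).re = s := by intro s; simp [hφ]
    have hφmem : ∀ s ∈ Metric.ball z₀.re ε, φ s ∈ {z : ℂ | z.re ∈ I} := by
      intro s hs; simp only [Set.mem_setOf_eq, hφre]; exact hball hs
    -- h := f ∘ φ has zero derivative on the ball
    have hderiv : ∀ s ∈ Metric.ball z₀.re ε, HasDerivAt (fun s => f (φ s)) 0 s := by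
      intro s hs
      have hsI : s ∈ I := hball hs
      have hφd : HasDerivAt φ (1 + (((-(H s)) / τ : ℝ) : ℂ) * Complex.I) s := by
        have h1 : HasDerivAt (fun s : ℝ => ((s : ℝ) : ℂ)) 1 s := by
          simpa using (hasDerivAt_id s).ofReal_comp
        have h2 : HasDerivAt (fun s => (δ - G s) / τ) ((-(H s)) / τ) s :=
          by simpa using ((hasDerivAt_const s δ).sub (hG s hsI)).div_const τ
        have h3 : HasDerivAt (fun s => ((((δ - G s) / τ : ℝ)) : ℂ) * Complex.I)
            ((((-(H s)) / τ : ℝ) : ℂ) * Complex.I) s := h2.ofReal_comp.mul_const Complex.I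
        exact h1.add h3
      have hmem := hφmem s hs
      have hfd : HasFDerivAt f (fderiv ℝ f (φ s)) (φ s) :=
        ((hf.contDiffAt (hstrip.mem_nhds hmem)).differentiableAt (by simp)).hasFDerivAt
      have hcomp := hfd.comp_hasDerivAt s hφd
      have key : fderiv ℝ f (φ s) (1 + (((-(H s)) / τ : ℝ) : ℂ) * Complex.I) = 0 := by
        have hsmul : (((-(H s)) / τ : ℝ) : ℂ) * Complex.I
            = ((-(H s)) / τ : ℝ) • Complex.I := by
          rw [Complex.real_smul]
        rw [hsmul, (fderiv ℝ f (φ s)).map_add, (fderiv ℝ f (φ s)).map_smul]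
        have hp := hPDE' (φ s) hmem
        rw [hφre] at hp
        simp only [smul_eq_mul]
        field_simp
        linarith
      rw [key] at hcomp
      exact hcomp
    -- constancy on the ball
    have hconst : f (φ z.re) = f (φ z₀.re) := by
      have hcv : Convex ℝ (Metric.ball z₀.re ε) := convex_ball z₀.re ε
      refine hcv.is_const_of_fderivWithin_eq_zero (𝕜 := ℝ) (f := fun s => f (φ s)) ?_ ?_ hz
        (Metric.mem_ball_self hε)
      · intro s hs
        exact ((hderiv s hs).differentiableAt).differentiableWithinAt
      · intro s hs
        have := (hderiv s hs).hasFDerivAt.fderiv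
        rw [fderivWithin_of_isOpen Metric.isOpen_ball hs, this]
        ext x; simp
    have h1 : φ z.re = z := by
      rw [hφ]
      simp only [hδ]
      have : (τ * z.im + G z.re - G z.re) / τ = z.im := by field_simp; ring
      rw [this]
      exact Complex.re_add_im z
    have h2 : φ z₀.re = γ δ := by rw [hφ, hγ, hc]
    rw [← h1, hconst, h2]
end

section
/- Let Ω ⊆ ℂ be open, let λ, u, H : Ω → ℝ and β, f : Ω → ℝ be smooth, let τ ∈ ℝ and σ ∈ {1, −1}, and set A = (1/2 + i·f)·β_z and A* = σ·(−1/2 + i·f)·β_z on Ω. Suppose A_z̄ = (u·λ/2)·(H + iτ) and A*_z̄ = (σ·u·λ/2)·(−H + iτ) on Ω (i.e., A and A* satisfy equation (C.2) for the data (λ, u, H) and (λ, σ·u, −H) respectively). Then on Ω: β_{z z̄} = λ·H·u, and f_z̄·β_z + f·β_{z z̄} = (λ·u·τ)/2; in particular the product f_z̄·β_z is real-valued on Ω. -/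
open Complex

lemma wdzbar_comb (a b : ℂ → ℂ) (c d : ℂ) (z : ℂ)
    (ha : DifferentiableAt ℝ a z) (hb : DifferentiableAt ℝ b z) :
    wdzbar (fun w => c * a w + d * b w) z = c * wdzbar a z + d * wdzbar b z := by
  have hadd : fderiv ℝ (fun w => c * a w + d * b w) z
      = fderiv ℝ (fun w => c * a w) z + fderiv ℝ (fun w => d * b w) z :=
    fderiv_add (ha.const_mul c) (hb.const_mul d)
  have h2 : fderiv ℝ (fun w => c * a w) z = c • fderiv ℝ a z := fderiv_const_mul ha c
  have h3 : fderiv ℝ (fun w => d * b w) z = d • fderiv ℝ b z := fderiv_const_mul hb d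
  simp only [wdzbar, hadd, h2, h3, ContinuousLinearMap.add_apply,
    ContinuousLinearMap.coe_smul', Pi.smul_apply, smul_eq_mul]
  ring

lemma wdzbar_mul (a b : ℂ → ℂ) (z : ℂ)
    (ha : DifferentiableAt ℝ a z) (hb : DifferentiableAt ℝ b z) :
    wdzbar (fun w => a w * b w) z = wdzbar a z * b z + a z * wdzbar b z := by
  have h := fderiv_fun_mul ha hb
  simp only [wdzbar, h, ContinuousLinearMap.add_apply, ContinuousLinearMap.coe_smul',
    Pi.smul_apply, smul_eq_mul]
  ring

/-- System (nu3): with `A = (1/2 + i·f)·β_z` and `A* = σ·(−1/2 + i·f)·β_z` satisfying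
(C.2) for the data `(λ, u, H)` and `(λ, σ·u, −H)` respectively, one gets
`β_{z z̄} = λHu` and `f_z̄·β_z + f·β_{z z̄} = λuτ/2`; in particular `f_z̄·β_z ∈ ℝ`. -/
theorem stmt_17 (Ω : Set ℂ) (hΩ : IsOpen Ω) (lam u H beta f : ℂ → ℝ)
    (hlam : ContDiffOn ℝ (⊤ : ℕ∞) lam Ω) (hu : ContDiffOn ℝ (⊤ : ℕ∞) u Ω)
    (hH : ContDiffOn ℝ (⊤ : ℕ∞) H Ω) (hbeta : ContDiffOn ℝ (⊤ : ℕ∞) beta Ω)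
    (hf : ContDiffOn ℝ (⊤ : ℕ∞) f Ω)
    (τ σ : ℝ) (hσ : σ = 1 ∨ σ = -1)
    (h1 : ∀ z ∈ Ω,
      wdzbar (fun w => (1 / 2 + Complex.I * (f w : ℂ)) *
        wdz (fun w' => (beta w' : ℂ)) w) z
      = ((u z : ℂ) * (lam z : ℂ) / 2) * ((H z : ℂ) + Complex.I * (τ : ℂ)))
    (h2 : ∀ z ∈ Ω,
      wdzbar (fun w => (σ : ℂ) * (-(1 / 2) + Complex.I * (f w : ℂ)) *
        wdz (fun w' => (beta w' : ℂ)) w) z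
      = ((σ : ℂ) * (u z : ℂ) * (lam z : ℂ) / 2) * (-(H z : ℂ) + Complex.I * (τ : ℂ))) :
    ∀ z ∈ Ω,
      wdzbar (fun w => wdz (fun w' => (beta w' : ℂ)) w) z
        = ((lam z * H z * u z : ℝ) : ℂ) ∧
      wdzbar (fun w => (f w : ℂ)) z * wdz (fun w' => (beta w' : ℂ)) z
          + (f z : ℂ) * wdzbar (fun w => wdz (fun w' => (beta w' : ℂ)) w) z
        = ((lam z * u z * τ / 2 : ℝ) : ℂ) ∧
      (wdzbar (fun w => (f w : ℂ)) z * wdz (fun w' => (beta w' : ℂ)) z).im = 0 := by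
  intro z hz
  have hbetaC : ContDiffOn ℝ (⊤ : ℕ∞) (fun w => (beta w : ℂ)) Ω :=
    Complex.ofRealCLM.contDiff.comp_contDiffOn hbeta
  have hfd : ContDiffOn ℝ (⊤ : ℕ∞) (fun w => fderiv ℝ (fun w' => (beta w' : ℂ)) w) Ω :=
    hbetaC.fderiv_of_isOpen hΩ (by simp)
  have hBc : ContDiffOn ℝ (⊤ : ℕ∞) (fun w => wdz (fun w' => (beta w' : ℂ)) w) Ω := by
    have h1c : ContDiffOn ℝ (⊤ : ℕ∞) (fun w => fderiv ℝ (fun w' => (beta w' : ℂ)) w 1) Ω :=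
      hfd.clm_apply contDiffOn_const
    have h2c : ContDiffOn ℝ (⊤ : ℕ∞) (fun w => fderiv ℝ (fun w' => (beta w' : ℂ)) w Complex.I) Ω :=
      hfd.clm_apply contDiffOn_const
    have := (h1c.sub ((contDiffOn_const (c := Complex.I)).mul h2c)).div_const 2
    simpa [wdz] using this
  have hB : DifferentiableAt ℝ (fun w => wdz (fun w' => (beta w' : ℂ)) w) z :=
    ((hBc z hz).contDiffAt (hΩ.mem_nhds hz)).differentiableAt (by simp)
  have hfC : DifferentiableAt ℝ (fun w => (f w : ℂ)) z := by
    have hc : ContDiffOn ℝ (⊤ : ℕ∞) (fun w => (f w : ℂ)) Ω :=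
      Complex.ofRealCLM.contDiff.comp_contDiffOn hf
    exact ((hc z hz).contDiffAt (hΩ.mem_nhds hz)).differentiableAt (by simp)
  have hP : DifferentiableAt ℝ (fun w => (f w : ℂ) * wdz (fun w' => (beta w' : ℂ)) w) z :=
    hfC.mul hB
  have H1 : (1/2 : ℂ) * wdzbar (fun w => wdz (fun w' => (beta w' : ℂ)) w) z
      + Complex.I * wdzbar (fun w => (f w : ℂ) * wdz (fun w' => (beta w' : ℂ)) w) z
      = ((u z : ℂ) * (lam z : ℂ) / 2) * ((H z : ℂ) + Complex.I * (τ : ℂ)) := by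
    rw [← wdzbar_comb _ _ _ _ _ hB hP]
    convert h1 z hz using 2
    funext w
    ring
  have H2 : (-(σ:ℂ)/2) * wdzbar (fun w => wdz (fun w' => (beta w' : ℂ)) w) z
      + ((σ:ℂ) * Complex.I) * wdzbar (fun w => (f w : ℂ) * wdz (fun w' => (beta w' : ℂ)) w) z
      = ((σ : ℂ) * (u z : ℂ) * (lam z : ℂ) / 2) * (-(H z : ℂ) + Complex.I * (τ : ℂ)) := by
    rw [← wdzbar_comb _ _ _ _ _ hB hP]
    convert h2 z hz using 2
    funext w
    ring
  have hprod : wdzbar (fun w => (f w : ℂ) * wdz (fun w' => (beta w' : ℂ)) w) z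
      = wdzbar (fun w => (f w : ℂ)) z * wdz (fun w' => (beta w' : ℂ)) z
        + (f z : ℂ) * wdzbar (fun w => wdz (fun w' => (beta w' : ℂ)) w) z := by
    have h := wdzbar_mul (fun w => (f w : ℂ)) (fun w => wdz (fun w' => (beta w' : ℂ)) w) z hfC hB
    exact h
  have key1 : wdzbar (fun w => wdz (fun w' => (beta w' : ℂ)) w) z
      = ((lam z * H z * u z : ℝ) : ℂ) := by
    rcases hσ with rfl | rfl
    · push_cast at H1 H2 ⊢
      linear_combination H1 - H2
    · push_cast at H1 H2 ⊢
      linear_combination H1 + H2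
  have key2 : wdzbar (fun w => (f w : ℂ)) z * wdz (fun w' => (beta w' : ℂ)) z
      + (f z : ℂ) * wdzbar (fun w => wdz (fun w' => (beta w' : ℂ)) w) z
      = ((lam z * u z * τ / 2 : ℝ) : ℂ) := by
    rcases hσ with rfl | rfl
    · push_cast at H1 H2 ⊢
      linear_combination (-Complex.I/2) * (H1 + H2) - hprod + (wdzbar (fun w => (f w : ℂ) * wdz (fun w' => (beta w' : ℂ)) w) z - (u z : ℂ) * (lam z : ℂ) * (τ : ℂ) / 2) * Complex.I_sq
    · push_cast at H1 H2 ⊢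
      linear_combination (-Complex.I/2) * (H1 - H2) - hprod + (wdzbar (fun w => (f w : ℂ) * wdz (fun w' => (beta w' : ℂ)) w) z - (u z : ℂ) * (lam z : ℂ) * (τ : ℂ) / 2) * Complex.I_sq
  refine ⟨key1, key2, ?_⟩
  have key3 : wdzbar (fun w => (f w : ℂ)) z * wdz (fun w' => (beta w' : ℂ)) z
      = ((lam z * u z * τ / 2 : ℝ) : ℂ) - (f z : ℂ) * ((lam z * H z * u z : ℝ) : ℂ) := by
    linear_combination key2 - (f z : ℂ) * key1
  rw [key3]
  simp
end

section
/- Let κ, τ be real constants with κ − 4τ² ≠ 0, let σ ∈ {1, −1}, and let (λ, u, H, p, A) and (λ, σ·u, −H, p*, A*) be two fundamental data sets on an open set Ω ⊆ ℂ for the same (κ, τ), sharing the same λ, and assume A = σ·A* on Ω. Then u·H ≡ 0 on Ω; moreover, at every point of Ω where H ≠ 0 one has u = 0 and A_z̄ = 0, so A is holomorphic on the open set {H ≠ 0}. -/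
open Complex

lemma wdzbar_congr {f g : ℂ → ℂ} {z : ℂ} (h : f =ᶠ[nhds z] g) :
    wdzbar f z = wdzbar g z := by
  unfold wdzbar; rw [h.fderiv_eq]

lemma wdzbar_const_mul (c : ℂ) {f : ℂ → ℂ} {z : ℂ} (hf : DifferentiableAt ℝ f z) :
    wdzbar (fun w => c * f w) z = c * wdzbar f z := by
  unfold wdzbar
  rw [fderiv_const_mul hf c]
  simp
  ring

lemma diffC_of_wdzbar_zero {f : ℂ → ℂ} {z : ℂ} (hf : DifferentiableAt ℝ f z)
    (h0 : wdzbar f z = 0) : DifferentiableAt ℂ f z := by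
  set L := fderiv ℝ f z with hL
  have h1 : L 1 + Complex.I * L Complex.I = 0 := by
    have := h0
    unfold wdzbar at this
    field_simp at this
    simpa using this
  have hLI : L Complex.I = Complex.I * L 1 := by
    have := congrArg (fun w => Complex.I * w) h1
    simp [mul_add, ← mul_assoc, Complex.I_mul_I] at this
    linear_combination -this
  have key : ∀ w : ℂ, L w = w * L 1 := by
    intro w
    have hw : w = (w.re : ℝ) • (1:ℂ) + (w.im : ℝ) • Complex.I := by
      simp [Complex.real_smul, Complex.re_add_im]
    calc L w = L ((w.re : ℝ) • (1:ℂ) + (w.im : ℝ) • Complex.I) := by rw [← hw]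
      _ = (w.re : ℝ) • L 1 + (w.im : ℝ) • L Complex.I := by
          rw [map_add, map_smul, map_smul]
      _ = w * L 1 := by
          rw [hLI, Complex.real_smul, Complex.real_smul]
          rw [← Complex.re_add_im w]
          ring_nf
          simp [Complex.re_add_im]
          ring
  have : HasFDerivAt f ((L 1) • (1 : ℂ →L[ℂ] ℂ)) z := by
    apply hasFDerivAt_of_restrictScalars ℝ hf.hasFDerivAt
    ext w
    simp [key w]
    rw [← hL, key w]; ring
  exact this.differentiableAt

/-- The degenerate case `A = σ·A*` for negative Bonnet pairs: if `(λ, u, H, p, A)` and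
`(λ, σ·u, −H, p*, A*)` are fundamental data sets for the same `(κ, τ)` with `A = σ·A*`,
then `u·H ≡ 0`; where `H ≠ 0` one has `u = 0` and `A_z̄ = 0`, so `A` is holomorphic on
the open set `{H ≠ 0}`. -/
theorem stmt_19 (κ τ : ℝ) (hκτ : κ - 4 * τ ^ 2 ≠ 0) (σ : ℝ) (hσ : σ = 1 ∨ σ = -1)
    (Ω : Set ℂ) (hΩ : IsOpen Ω)
    (lam u H : ℂ → ℝ) (p A pstar Astar : ℂ → ℂ)
    (h : IsFundData κ τ Ω lam u H p A)
    (hstar : IsFundData κ τ Ω lam (fun z => σ * u z) (fun z => -H z) pstar Astar)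
    (hA : ∀ z ∈ Ω, A z = (σ : ℂ) * Astar z) :
    (∀ z ∈ Ω, u z * H z = 0) ∧
    (∀ z ∈ Ω, H z ≠ 0 → u z = 0 ∧ wdzbar A z = 0) ∧
    DifferentiableOn ℂ A {z ∈ Ω | H z ≠ 0} := by
  have hσ2 : (σ : ℂ) * (σ : ℂ) = 1 := by
    rcases hσ with h1 | h1 <;> subst h1 <;> norm_num
  have uH0 : ∀ z ∈ Ω, u z * H z = 0 := by
    intro z hz
    have hdA : DifferentiableAt ℝ Astar z :=
      (hstar.smooth_A.contDiffAt (hΩ.mem_nhds hz)).differentiableAt (by simp)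
    have heq : A =ᶠ[nhds z] (fun w => (σ : ℂ) * Astar w) := by
      filter_upwards [hΩ.mem_nhds hz] with w hw using hA w hw
    have e1 : wdzbar A z = (σ : ℂ) * wdzbar Astar z :=
      (wdzbar_congr heq).trans (wdzbar_const_mul _ hdA)
    have e2 := hstar.c2 z hz
    have e3 := h.c2 z hz
    have this1 := e3.symm.trans e1
    rw [e2] at this1
    push_cast at this1
    have hC : (u z : ℂ) * (lam z : ℂ) * (H z : ℂ) = 0 := by
      linear_combination this1 +
        ((u z : ℂ) * (lam z : ℂ) / 2 * (-(H z : ℂ) + Complex.I * (τ : ℂ))) * hσ2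
    have hR : u z * lam z * H z = 0 := by exact_mod_cast hC
    have hmul : (u z * H z) * lam z = 0 := by linear_combination hR
    exact (mul_eq_zero.mp hmul).resolve_right (h.lam_pos z hz).ne'
  have part2 : ∀ z ∈ Ω, H z ≠ 0 → u z = 0 ∧ wdzbar A z = 0 := by
    intro z hz hH
    have hu : u z = 0 := (mul_eq_zero.mp (uH0 z hz)).resolve_right hH
    refine ⟨hu, ?_⟩
    rw [h.c2 z hz, hu]
    simp
  refine ⟨uH0, part2, ?_⟩
  intro z hz
  obtain ⟨hzΩ, hH⟩ := hz
  have hd : DifferentiableAt ℝ A z :=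
    (h.smooth_A.contDiffAt (hΩ.mem_nhds hzΩ)).differentiableAt (by simp)
  exact (diffC_of_wdzbar_zero hd (part2 z hzΩ hH).2).differentiableWithinAt
end
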